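/- Let f : (ZMod 2)^n → ℝ be a Boolean function (f(x) ∈ {−1,1} for all x) computed by a parity decision tree of depth at most k with m leaves. Then spar(f) ≤ m·2^k (and in particular spar(f) ≤ 4^k), and ‖f̂‖₁ ≤ m (and in particular ‖f̂‖₁ ≤ 2^k). -/

import Mathlib

/-!
At a node labelled `α` with subtrees computing `g` and `h`, the computed function is
`((1 + χ_α) g + (1 - χ_α) h) / 2`, and multiplying by `χ_α` shifts the spectrum by `α`. Hence
`f̂(β) = (ĝ(β) + ĥ(β) + ĝ(α + β) - ĥ(α + β)) / 2`: the Fourier support of `f` lies in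
`U ∪ (α + U)` with `U` the union of the supports of `ĝ` and `ĥ`, and `‖f̂‖₁ ≤ ‖ĝ‖₁ + ‖ĥ‖₁`.
A leaf computes a constant `±1`, whose spectrum is `{0}` with norm `1`, so induction on the tree
gives `spar(f) ≤ m·2^k` and `‖f̂‖₁ ≤ m`; finally `m ≤ 2^k`.
-/

/-- The character `χ_α(x) = (-1)^{⟨α,x⟩}` on the Boolean cube `(ZMod 2)^n`. -/
noncomputable def chi {n : ℕ} (α x : Fin n → ZMod 2) : ℝ :=
  if (∑ i, α i * x i : ZMod 2) = 0 then 1 else -1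

/-- The Fourier coefficient `f̂(α) = 2^{-n} ∑_x f(x) χ_α(x)`. -/
noncomputable def fhat {n : ℕ} (f : (Fin n → ZMod 2) → ℝ) (α : Fin n → ZMod 2) : ℝ :=
  (2 ^ n : ℝ)⁻¹ * ∑ x : Fin n → ZMod 2, f x * chi α x

/-- Parity decision trees over `(ZMod 2)^n`: internal nodes are labeled by linear
functions `α`, leaves by `±1` (encoded by a `Bool`). -/
inductive PDT (n : ℕ) : Type where
  | leaf (b : Bool) : PDT n
  | node (α : Fin n → ZMod 2) (t₀ t₁ : PDT n) : PDT n

namespace PDT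

/-- Evaluation of a parity decision tree on an input `x`: at a node labeled `α`
we go left if `⟨α,x⟩ = 0` and right if `⟨α,x⟩ = 1`; a leaf labeled `b` outputs
`1` or `-1`. -/
noncomputable def eval {n : ℕ} : PDT n → (Fin n → ZMod 2) → ℝ
  | leaf b, _ => if b then 1 else -1
  | node α t₀ t₁, x => if (∑ i, α i * x i : ZMod 2) = 0 then t₀.eval x else t₁.eval x

/-- The size of a parity decision tree = its number of leaves. -/
def size {n : ℕ} : PDT n → ℕ
  | leaf _ => 1
  | node _ t₀ t₁ => t₀.size + t₁.size

/-- The depth of a parity decision tree = maximal number of internal nodes on a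
root-to-leaf path. -/
def depth {n : ℕ} : PDT n → ℕ
  | leaf _ => 0
  | node _ t₀ t₁ => max t₀.depth t₁.depth + 1

end PDT

open Finset Function

lemma zmod_two_eq_zero_or_one (a : ZMod 2) : a = 0 ∨ a = 1 := by
  revert a; decide

section Fourier

variable {n : ℕ}

lemma chi_eq_ite (α x : Fin n → ZMod 2) : chi α x = if α ⬝ᵥ x = 0 then 1 else -1 := rfl

lemma chi_comm (α x : Fin n → ZMod 2) : chi α x = chi x α := by
  rw [chi_eq_ite, chi_eq_ite, dotProduct_comm]

@[simp]
lemma chi_zero_left (x : Fin n → ZMod 2) : chi 0 x = 1 := by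
  simp [chi_eq_ite]

lemma chi_add_left (α β x : Fin n → ZMod 2) : chi (α + β) x = chi α x * chi β x := by
  simp only [chi_eq_ite, add_dotProduct]
  rcases zmod_two_eq_zero_or_one (α ⬝ᵥ x) with h | h <;>
    rcases zmod_two_eq_zero_or_one (β ⬝ᵥ x) with h' | h' <;>
    simp [h, h', CharTwo.add_self_eq_zero]

lemma chi_add_right (α x y : Fin n → ZMod 2) : chi α (x + y) = chi α x * chi α y := by
  rw [chi_comm, chi_add_left, chi_comm x, chi_comm y]

lemma sum_chi_eq_zero {β : Fin n → ZMod 2} (hβ : β ≠ 0) : ∑ x, chi β x = 0 := by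
  obtain ⟨i, hi⟩ := Function.ne_iff.mp hβ
  have hβi : β i = 1 := (zmod_two_eq_zero_or_one _).resolve_left hi
  have hflip : chi β (Pi.single i 1) = -1 := by
    simp [chi_eq_ite, dotProduct_single, hβi]
  have hshift := Equiv.sum_comp (Equiv.addRight (Pi.single i (1 : ZMod 2))) (chi β)
  simp only [Equiv.coe_addRight, chi_add_right, hflip, mul_neg_one, sum_neg_distrib] at hshift
  linarith

lemma fhat_const (c : ℝ) (β : Fin n → ZMod 2) :
    fhat (fun _ => c) β = if β = 0 then c else 0 := by
  unfold fhat
  split_ifs with hβ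
  · simp [hβ]
  · simp [← mul_sum, sum_chi_eq_zero hβ]

lemma support_fhat_const_subset (c : ℝ) : support (fhat fun _ : Fin n → ZMod 2 => c) ⊆ {0} := by
  intro β hβ
  by_contra h
  exact hβ (by rw [fhat_const, if_neg (Set.mem_singleton_iff.not.mp h)])

lemma sum_abs_fhat_const (c : ℝ) : ∑ β : Fin n → ZMod 2, |fhat (fun _ => c) β| = |c| := by
  simp [fhat_const, apply_ite]

def parityBranch (α : Fin n → ZMod 2) (g h : (Fin n → ZMod 2) → ℝ) :
    (Fin n → ZMod 2) → ℝ :=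
  fun x => if α ⬝ᵥ x = 0 then g x else h x

lemma parityBranch_apply (α : Fin n → ZMod 2) (g h : (Fin n → ZMod 2) → ℝ)
    (x : Fin n → ZMod 2) :
    parityBranch α g h x = (g x + h x + chi α x * (g x - h x)) / 2 := by
  unfold parityBranch
  split_ifs with hx
  · rw [chi_eq_ite, if_pos hx]; ring
  · rw [chi_eq_ite, if_neg hx]; ring

lemma fhat_parityBranch (α : Fin n → ZMod 2) (g h : (Fin n → ZMod 2) → ℝ)
    (β : Fin n → ZMod 2) :
    fhat (parityBranch α g h) β
      = (fhat g β + fhat h β + fhat g (α + β) - fhat h (α + β)) / 2 := by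
  have hpoint : ∀ x, parityBranch α g h x * chi β x
      = (g x * chi β x + h x * chi β x + g x * chi (α + β) x - h x * chi (α + β) x) / 2 := by
    intro x
    rw [parityBranch_apply, chi_add_left]
    ring
  simp only [fhat, hpoint, ← sum_div, sum_add_distrib, sum_sub_distrib]
  ring

lemma support_fhat_parityBranch_subset (α : Fin n → ZMod 2) (g h : (Fin n → ZMod 2) → ℝ) :
    support (fhat (parityBranch α g h))
      ⊆ (support (fhat g) ∪ support (fhat h))
        ∪ (α + ·) '' (support (fhat g) ∪ support (fhat h)) := by
  intro β hβ
  by_cases hαβ : α + β ∈ support (fhat g) ∪ support (fhat h)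
  · refine Or.inr ⟨α + β, hαβ, ?_⟩
    funext i
    exact CharTwo.add_cancel_left (α i) (β i)
  · refine Or.inl (by_contra fun hβ' => hβ ?_)
    simp only [Set.mem_union, mem_support, not_or, not_not] at hαβ hβ'
    rw [fhat_parityBranch, hβ'.1, hβ'.2, hαβ.1, hαβ.2]
    ring

lemma ncard_support_fhat_parityBranch_le (α : Fin n → ZMod 2) (g h : (Fin n → ZMod 2) → ℝ) :
    (support (fhat (parityBranch α g h))).ncard
      ≤ 2 * ((support (fhat g)).ncard + (support (fhat h)).ncard) := by
  have hU : (support (fhat g) ∪ support (fhat h)).ncard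
      ≤ (support (fhat g)).ncard + (support (fhat h)).ncard :=
    Set.ncard_union_le _ _
  have hshift : ((α + ·) '' (support (fhat g) ∪ support (fhat h))).ncard
      ≤ (support (fhat g) ∪ support (fhat h)).ncard :=
    Set.ncard_image_le (Set.toFinite _)
  have hsplit := Set.ncard_union_le (support (fhat g) ∪ support (fhat h))
    ((α + ·) '' (support (fhat g) ∪ support (fhat h)))
  have hsub := Set.ncard_le_ncard (support_fhat_parityBranch_subset α g h) (Set.toFinite _)
  omega

lemma sum_abs_fhat_parityBranch_le (α : Fin n → ZMod 2) (g h : (Fin n → ZMod 2) → ℝ) :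
    ∑ β, |fhat (parityBranch α g h) β| ≤ ∑ β, |fhat g β| + ∑ β, |fhat h β| := by
  have hshift : ∀ F : (Fin n → ZMod 2) → ℝ, ∑ β, F (α + β) = ∑ β, F β :=
    Equiv.sum_comp (Equiv.addLeft α)
  calc ∑ β, |fhat (parityBranch α g h) β|
      ≤ ∑ β, (|fhat g β| + |fhat h β| + |fhat g (α + β)| + |fhat h (α + β)|) / 2 := by
        gcongr with β
        rw [fhat_parityBranch, abs_div, abs_two]
        gcongr
        exact (abs_sub _ _).trans (add_le_add_left (abs_add_three _ _ _) _)
    _ = ∑ β, |fhat g β| + ∑ β, |fhat h β| := by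
        simp only [← sum_div, sum_add_distrib, hshift fun β => |fhat g β|,
          hshift fun β => |fhat h β|]
        ring

end Fourier

namespace PDT

variable {n : ℕ}

lemma eval_leaf (b : Bool) : (leaf b : PDT n).eval = fun _ => if b then 1 else -1 := rfl

lemma eval_node (α : Fin n → ZMod 2) (t₀ t₁ : PDT n) :
    (node α t₀ t₁).eval = parityBranch α t₀.eval t₁.eval := rfl

lemma size_le_two_pow_depth (t : PDT n) : t.size ≤ 2 ^ t.depth := by
  induction t with
  | leaf b => simp [size, depth]
  | node α t₀ t₁ ih₀ ih₁ =>
    have h₀ := Nat.pow_le_pow_right two_pos (le_max_left t₀.depth t₁.depth)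
    have h₁ := Nat.pow_le_pow_right two_pos (le_max_right t₀.depth t₁.depth)
    simp only [size, depth, pow_succ]
    omega

lemma ncard_support_fhat_eval_le (t : PDT n) :
    (support (fhat t.eval)).ncard ≤ t.size * 2 ^ t.depth := by
  induction t with
  | leaf b =>
    simpa [eval_leaf, size, depth] using
      Set.ncard_le_ncard (support_fhat_const_subset (n := n) (if b then 1 else -1))
  | node α t₀ t₁ ih₀ ih₁ =>
    have h₀ := Nat.pow_le_pow_right two_pos (le_max_left t₀.depth t₁.depth)
    have h₁ := Nat.pow_le_pow_right two_pos (le_max_right t₀.depth t₁.depth)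
    calc (support (fhat (node α t₀ t₁).eval)).ncard
        ≤ 2 * (t₀.size * 2 ^ t₀.depth + t₁.size * 2 ^ t₁.depth) := by
          rw [eval_node]
          exact (ncard_support_fhat_parityBranch_le α _ _).trans (by gcongr)
      _ ≤ 2 * (t₀.size * 2 ^ max t₀.depth t₁.depth + t₁.size * 2 ^ max t₀.depth t₁.depth) := by
          gcongr
      _ = (node α t₀ t₁).size * 2 ^ (node α t₀ t₁).depth := by
          simp only [size, depth]; ring

lemma sum_abs_fhat_eval_le (t : PDT n) : ∑ β, |fhat t.eval β| ≤ t.size := by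
  induction t with
  | leaf b => cases b <;> simp [eval_leaf, size, sum_abs_fhat_const]
  | node α t₀ t₁ ih₀ ih₁ =>
    rw [eval_node, size, Nat.cast_add]
    exact (sum_abs_fhat_parityBranch_le α _ _).trans (add_le_add ih₀ ih₁)

end PDT

theorem pdt_sparsity_and_norm_bounds_general {n : ℕ}
    (f : (Fin n → ZMod 2) → ℝ)
    (T : PDT n) (hT : ∀ x, T.eval x = f x)
    (k m : ℕ) (hdepth : T.depth ≤ k) (hsize : T.size = m) :
    Nat.card {α : Fin n → ZMod 2 // fhat f α ≠ 0} ≤ m * 2 ^ k ∧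
    Nat.card {α : Fin n → ZMod 2 // fhat f α ≠ 0} ≤ 4 ^ k ∧
    (∑ α : Fin n → ZMod 2, |fhat f α|) ≤ (m : ℝ) ∧
    (∑ α : Fin n → ZMod 2, |fhat f α|) ≤ (2 : ℝ) ^ k := by
  obtain rfl : T.eval = f := funext hT
  subst hsize
  have hpow : 2 ^ T.depth ≤ 2 ^ k := Nat.pow_le_pow_right two_pos hdepth
  have hm : T.size ≤ 2 ^ k := T.size_le_two_pow_depth.trans hpow
  have hspar : Nat.card (support (fhat T.eval)) ≤ T.size * 2 ^ k := by
    rw [Nat.card_coe_set_eq]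
    exact T.ncard_support_fhat_eval_le.trans (by gcongr)
  have hnorm := T.sum_abs_fhat_eval_le
  refine ⟨hspar, hspar.trans ?_, hnorm, hnorm.trans (by exact_mod_cast hm)⟩
  calc T.size * 2 ^ k ≤ 2 ^ k * 2 ^ k := by gcongr
    _ = 4 ^ k := by rw [← mul_pow]; norm_num

/-- **Lemma 2.5**: if a Boolean function `f` is computed by a parity decision tree
of depth at most `k` with `m` leaves, then `spar(f) ≤ m·2^k ≤ 4^k` and
`‖f̂‖₁ ≤ m ≤ 2^k`. -/
theorem pdt_sparsity_and_norm_bounds {n : ℕ}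
    (f : (Fin n → ZMod 2) → ℝ) (hf : ∀ x, f x = 1 ∨ f x = -1)
    (T : PDT n) (hT : ∀ x, T.eval x = f x)
    (k m : ℕ) (hdepth : T.depth ≤ k) (hsize : T.size = m) :
    Nat.card {α : Fin n → ZMod 2 // fhat f α ≠ 0} ≤ m * 2 ^ k ∧
    Nat.card {α : Fin n → ZMod 2 // fhat f α ≠ 0} ≤ 4 ^ k ∧
    (∑ α : Fin n → ZMod 2, |fhat f α|) ≤ (m : ℝ) ∧
    (∑ α : Fin n → ZMod 2, |fhat f α|) ≤ (2 : ℝ) ^ k :=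
  pdt_sparsity_and_norm_bounds_general f T hT k m hdepth hsize
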